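/- arXiv:2401.00705 — 4 statements merged into one kernel-verified Lean document; each statement's English description precedes it below -/
import Mathlib

section
/- For any tree T, the metric dimension of its cube is at least the metric dimension of the tree: β(T^3) ≥ β(T). -/
open SimpleGraph

/-- Ceiling of `n / 3` over the naturals. -/
def ceil3 (n : ℕ) : ℕ := (n + 2) / 3

/-- The cube of a graph: same vertices, `u,v` adjacent iff `1 ≤ d(u,v) ≤ 3`. -/
def cube {V : Type*} (G : SimpleGraph V) : SimpleGraph V where
  Adj u v := u ≠ v ∧ 1 ≤ G.dist u v ∧ G.dist u v ≤ 3
  symm := ⟨fun u v ⟨h1, h2, h3⟩ =>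
    ⟨h1.symm, by rwa [SimpleGraph.dist_comm], by rwa [SimpleGraph.dist_comm]⟩⟩
  loopless := ⟨fun u ⟨h, _⟩ => h rfl⟩

/-- `S` is a resolving set of `G`. -/
def IsResolving {V : Type*} (G : SimpleGraph V) (S : Set V) : Prop :=
  ∀ u v : V, u ≠ v → ∃ s ∈ S, G.dist s u ≠ G.dist s v

/-- The metric dimension of a graph on a finite vertex type. -/
noncomputable def metricDim {V : Type*} [Fintype V] (G : SimpleGraph V) : ℕ :=
  sInf {n | ∃ S : Finset V, S.card = n ∧ IsResolving G (S : Set V)}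

/-!
In a connected graph `G`, a shortest path cut into blocks of three edges is a path in the cube,
and conversely every cube edge spans at most three edges of `G`; hence
`d_{G³}(u, v) = ⌈d_G(u, v) / 3⌉`. Distances in `G³` are thus a function of distances in `G`,
so every resolving set of `G³` resolves `G`.
-/

namespace SimpleGraph

variable {V : Type*} {G H : SimpleGraph V} {u v : V}

lemma le_cube (G : SimpleGraph V) : G ≤ cube G :=
  fun _ _ h => ⟨h.ne, by simp [dist_eq_one_iff_adj.mpr h]⟩

lemma Connected.connected_cube (hG : G.Connected) : (cube G).Connected :=
  hG.mono G.le_cube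

lemma Connected.dist_cube_le_one (hG : G.Connected) (h : G.dist u v ≤ 3) :
    (cube G).dist u v ≤ 1 := by
  obtain rfl | huv := eq_or_ne u v
  · simp
  · have hpos := hG.pos_dist_of_ne huv
    exact (dist_eq_one_iff_adj (G := cube G).mpr ⟨huv, hpos, h⟩).le

lemma Connected.dist_cube_le_of_dist_le (hG : G.Connected) {n : ℕ} (h : G.dist u v ≤ 3 * n) :
    (cube G).dist u v ≤ n := by
  induction n generalizing u with
  | zero => simp [hG.dist_eq_zero_iff.mp (Nat.le_zero.mp h)]
  | succ n ih =>
    obtain ⟨p, hp⟩ := hG.exists_walk_length_eq_dist u v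
    have hhead : G.dist u (p.getVert 3) ≤ 3 := (dist_le (p.take 3)).trans (by simp)
    have htail : G.dist (p.getVert 3) v ≤ 3 * n :=
      (dist_le (p.drop 3)).trans (by rw [Walk.drop_length]; omega)
    calc (cube G).dist u v
        ≤ (cube G).dist u (p.getVert 3) + (cube G).dist (p.getVert 3) v :=
          hG.connected_cube.dist_triangle
      _ ≤ 1 + n := add_le_add (hG.dist_cube_le_one hhead) (ih htail)
      _ = n + 1 := add_comm 1 n

lemma Connected.dist_le_mul_length (hG : G.Connected) {k : ℕ}
    (hk : ∀ a b, H.Adj a b → G.dist a b ≤ k) (p : H.Walk u v) :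
    G.dist u v ≤ k * p.length := by
  induction p with
  | nil => simp
  | @cons a b c hab q ih =>
    calc G.dist a c ≤ G.dist a b + G.dist b c := hG.dist_triangle
      _ ≤ k + k * q.length := add_le_add (hk a b hab) ih
      _ = k * (q.cons hab).length := by rw [Walk.length_cons]; ring

lemma Connected.dist_le_three_mul_dist_cube (hG : G.Connected) (u v : V) :
    G.dist u v ≤ 3 * (cube G).dist u v := by
  obtain ⟨p, hp⟩ := hG.connected_cube.exists_walk_length_eq_dist u v
  exact hp ▸ hG.dist_le_mul_length (H := cube G) (fun _ _ h => h.2.2) p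

lemma Connected.dist_cube (hG : G.Connected) (u v : V) :
    (cube G).dist u v = ceil3 (G.dist u v) := by
  have hle := hG.dist_cube_le_of_dist_le (u := u) (v := v) (n := ceil3 (G.dist u v))
    (by unfold ceil3; omega)
  have hge := hG.dist_le_three_mul_dist_cube u v
  unfold ceil3 at hle ⊢
  omega

end SimpleGraph

lemma IsResolving.of_dist_eq_comp {V : Type*} {G H : SimpleGraph V} {S : Set V} (f : ℕ → ℕ)
    (hf : ∀ u v, H.dist u v = f (G.dist u v)) (hS : IsResolving H S) : IsResolving G S := by
  intro u v huv
  obtain ⟨s, hs, hne⟩ := hS u v huv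
  exact ⟨s, hs, fun h => hne (by rw [hf, hf, h])⟩

lemma SimpleGraph.Connected.isResolving_univ {V : Type*} {G : SimpleGraph V}
    (hG : G.Connected) : IsResolving G Set.univ :=
  fun u v huv => ⟨u, trivial, by simpa using (hG.pos_dist_of_ne huv).ne⟩

lemma metricDim_le_of_forall_isResolving {V : Type*} [Fintype V] {G H : SimpleGraph V}
    (hH : H.Connected) (h : ∀ S, IsResolving H S → IsResolving G S) :
    metricDim G ≤ metricDim H := by
  have hne : {n | ∃ S : Finset V, S.card = n ∧ IsResolving H (S : Set V)}.Nonempty :=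
    ⟨_, Finset.univ, rfl, by simpa using hH.isResolving_univ⟩
  obtain ⟨S, hS, hres⟩ := Nat.sInf_mem hne
  exact Nat.sInf_le ⟨S, hS, h _ hres⟩

/-- For any tree, the metric dimension of its cube is at least that of the tree. -/
theorem metricDim_le_metricDim_cube {V : Type*} [Fintype V] (G : SimpleGraph V)
    (hT : G.IsTree) : metricDim G ≤ metricDim (cube G) :=
  metricDim_le_of_forall_isResolving hT.connected.connected_cube
    fun _ => IsResolving.of_dist_eq_comp ceil3 hT.connected.dist_cube
end

section
/- Let T be a tree and v a vertex of degree m ≥ 3 that is not a major stem (i.e., at most one component of T − v together with v forms a path). Then at least m − 1 of the m components of T − v contain a vertex of degree ≥ 3 in T which has at least two legs attached (a major stem of T). -/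
open SimpleGraph

/-- A connected component `D` of `T − w` is a *leg* (branch path) at `w` if the
branch it spans is a path, equivalently (in a tree) every vertex of it has
degree at most 2 in `T`. -/
def IsLegComp {V : Type*} [Fintype V] (G : SimpleGraph V) [DecidableRel G.Adj] (w : V)
    (D : (G.induce {x | x ≠ w}).ConnectedComponent) : Prop :=
  ∀ x ∈ D.supp, G.degree (x : V) ≤ 2

/-- A *major stem* is a vertex of degree ≥ 3 having at least two legs attached. -/
def IsMajorStem {V : Type*} [Fintype V] (G : SimpleGraph V) [DecidableRel G.Adj]
    (w : V) : Prop :=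
  3 ≤ G.degree w ∧ ∃ D₁ D₂ : (G.induce {x | x ≠ w}).ConnectedComponent,
    D₁ ≠ D₂ ∧ IsLegComp G w D₁ ∧ IsLegComp G w D₂

/-! In a tree, distinct neighbours of a vertex `w` lie in distinct components of `T − w`, so
`T − v` has at least `m` components, of which at most one is a leg because `v` is not a major
stem. A non-leg component `D` contains a vertex of degree at least 3; such a vertex `w` farthest
from `v` is a major stem. Indeed, every component of `T − w` other than the one containing `v`
lies inside `D` and strictly farther from `v` than `w`, so by maximality all its vertices have
degree at most 2, and there are at least `deg w − 1 ≥ 2` such components. -/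

namespace SimpleGraph

variable {V : Type*} {G : SimpleGraph V}

lemma Walk.mem_support_of_connectedComponentMk_ne {w a b : V} (p : G.Walk a b)
    (ha : a ≠ w) (hb : b ≠ w)
    (h : (G.induce {x | x ≠ w}).connectedComponentMk ⟨a, ha⟩ ≠
      (G.induce {x | x ≠ w}).connectedComponentMk ⟨b, hb⟩) :
    w ∈ p.support := by
  by_contra hw
  exact h (ConnectedComponent.sound
    (p.induce {x | x ≠ w} fun x hx hxw => hw (hxw ▸ hx)).reachable)

lemma IsAcyclic.injective_connectedComponentMk_neighborSet (hG : G.IsAcyclic) (w : V) :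
    Function.Injective fun u : G.neighborSet w =>
      (G.induce {x | x ≠ w}).connectedComponentMk ⟨u, (G.ne_of_adj u.2).symm⟩ := by
  rintro ⟨u₁, h₁⟩ ⟨u₂, h₂⟩ heq
  obtain ⟨q, hq⟩ := (ConnectedComponent.exact heq).exists_isPath
  have hw : w ∉ (q.map (Embedding.induce {x | x ≠ w}).toHom).support := by
    rw [Walk.support_map, List.mem_map]
    rintro ⟨y, -, hy⟩
    exact y.2 hy
  have := hG.mem_support_of_ne_mem_support_of_adj_of_isPath (Path.singleton h₁.symm).2
    (hq.map Subtype.val_injective) h₂ hw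
  simp only [Path.singleton, Walk.support_cons, Walk.support_nil, List.mem_cons,
    List.not_mem_nil, or_false] at this
  rcases this with rfl | rfl
  · rfl
  · exact absurd h₂ G.irrefl

lemma IsAcyclic.degree_le_card_connectedComponent [Finite V] (hG : G.IsAcyclic) (w : V)
    [Fintype (G.neighborSet w)] :
    G.degree w ≤ Nat.card (G.induce {x | x ≠ w}).ConnectedComponent := by
  rw [← card_neighborSet_eq_degree, ← Nat.card_eq_fintype_card]
  exact Nat.card_le_card_of_injective _ (hG.injective_connectedComponentMk_neighborSet w)

lemma Connected.dist_lt_of_connectedComponentMk_ne (hG : G.Connected) {v w x : V}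
    (hwv : w ≠ v) (hxw : x ≠ w)
    (h : (G.induce {y | y ≠ w}).connectedComponentMk ⟨v, hwv.symm⟩ ≠
      (G.induce {y | y ≠ w}).connectedComponentMk ⟨x, hxw⟩) :
    G.dist v w < G.dist v x := by
  classical
  obtain ⟨p, hp⟩ := hG.exists_walk_length_eq_dist v x
  have hw := p.mem_support_of_connectedComponentMk_ne hwv.symm hxw h
  calc G.dist v w ≤ (p.takeUntil w hw).length := dist_le _
    _ < p.length := Walk.length_takeUntil_lt_length hw hxw.symm
    _ = G.dist v x := hp

lemma Preconnected.connectedComponentMk_eq_of_connectedComponentMk_ne (hG : G.Preconnected)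
    {v w x : V} (hwv : w ≠ v) (hxw : x ≠ w) (hxv : x ≠ v)
    (h : (G.induce {y | y ≠ w}).connectedComponentMk ⟨v, hwv.symm⟩ ≠
      (G.induce {y | y ≠ w}).connectedComponentMk ⟨x, hxw⟩) :
    (G.induce {y | y ≠ v}).connectedComponentMk ⟨w, hwv⟩ =
      (G.induce {y | y ≠ v}).connectedComponentMk ⟨x, hxv⟩ := by
  classical
  obtain ⟨p, hp⟩ := hG.exists_isPath v x
  have hw := p.mem_support_of_connectedComponentMk_ne hwv.symm hxw h
  cases p with
  | nil => exact absurd rfl hxv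
  | cons hadj q =>
    rw [Walk.cons_isPath_iff] at hp
    have hwq : w ∈ q.support := by simpa [hwv] using hw
    exact ConnectedComponent.sound ((q.dropUntil w hwq).induce {y | y ≠ v} fun y hy hyv =>
      hp.2 (hyv ▸ q.support_dropUntil_subset_support hwq hy)).reachable

theorem IsTree.exists_isMajorStem_of_not_isLegComp [Fintype V] [DecidableRel G.Adj]
    (hG : G.IsTree) {v : V} {D : (G.induce {x | x ≠ v}).ConnectedComponent}
    (hD : ¬ IsLegComp G v D) :
    ∃ w ∈ D.supp, IsMajorStem G w := by
  simp only [IsLegComp, not_forall, not_le] at hD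
  obtain ⟨x₀, hx₀D, hx₀⟩ := hD
  obtain ⟨⟨w, hwv⟩, ⟨hwD, hw⟩, hwmax⟩ :=
    Set.exists_max_image {x | x ∈ D.supp ∧ 2 < G.degree x} (fun x => G.dist v x)
      (Set.toFinite _) ⟨x₀, hx₀D, hx₀⟩
  dsimp only at hw hwmax
  set Cv := (G.induce {y | y ≠ w}).connectedComponentMk ⟨v, hwv.symm⟩
  have hleg : ∀ D' ≠ Cv, IsLegComp G w D' := by
    rintro D' hD' ⟨x, hxw⟩ hx
    rw [ConnectedComponent.mem_supp_iff] at hx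
    have hne : Cv ≠ (G.induce {y | y ≠ w}).connectedComponentMk ⟨x, hxw⟩ := hx ▸ hD'.symm
    have hxv : x ≠ v := by
      rintro rfl
      exact hne rfl
    have hxD : ⟨x, hxv⟩ ∈ D.supp := by
      rwa [ConnectedComponent.mem_supp_iff, ← hG.connected.preconnected
        |>.connectedComponentMk_eq_of_connectedComponentMk_ne hwv hxw hxv hne]
    by_contra! hx
    have hle : G.dist v x ≤ G.dist v w := hwmax ⟨x, hxv⟩ ⟨hxD, hx⟩
    exact hle.not_gt (hG.connected.dist_lt_of_connectedComponentMk_ne hwv hxw hne)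
  have hcomps : 1 < ({Cv}ᶜ : Set _).ncard := by
    have := hG.isAcyclic.degree_le_card_connectedComponent w
    rw [Set.ncard_compl, Set.ncard_singleton]
    omega
  rw [Set.one_lt_ncard] at hcomps
  obtain ⟨D₁, hD₁, D₂, hD₂, hne⟩ := hcomps
  exact ⟨⟨w, hwv⟩, hwD, hw, D₁, D₂, hne, hleg D₁ hD₁, hleg D₂ hD₂⟩

end SimpleGraph

/-- If a core vertex v of degree m ≥ 3 is not a major stem, then at least m − 1
of the components of T − v contain a major stem of T. -/
theorem components_contain_major_stems {V : Type*} [Fintype V] (G : SimpleGraph V)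
    [DecidableRel G.Adj] (hT : G.IsTree) (v : V) (m : ℕ) (hdeg : G.degree v = m)
    (hm : 3 ≤ m) (hnot : ¬ IsMajorStem G v) :
    m - 1 ≤ {D : (G.induce {x | x ≠ v}).ConnectedComponent |
      ∃ w ∈ D.supp, IsMajorStem G (w : V)}.ncard := by
  set L := {D : (G.induce {x | x ≠ v}).ConnectedComponent | IsLegComp G v D}
  have hL : L.ncard ≤ 1 := by
    by_contra! h
    rw [Set.one_lt_ncard] at h
    obtain ⟨D₁, h₁, D₂, h₂, hne⟩ := h
    exact hnot ⟨hdeg ▸ hm, D₁, D₂, hne, h₁, h₂⟩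
  have hcomps : m ≤ L.ncard + Lᶜ.ncard := by
    rw [Set.ncard_add_ncard_compl, ← hdeg]
    exact hT.isAcyclic.degree_le_card_connectedComponent v
  have hsub : Lᶜ ⊆ {D | ∃ w ∈ D.supp, IsMajorStem G (w : V)} :=
    fun _ hD => hT.exists_isMajorStem_of_not_isLegComp hD
  have := Set.ncard_le_ncard hsub
  omega
end

section
/- Let T be a tree and v a major stem with two distinct mid legs L and L' (legs of length exactly 2). Let u ∈ L and u' ∈ L' with d_T(v,u) = d_T(v,u') = k for k ∈ {1,2}. Then no vertex x with x ≠ u and x ≠ u' resolves u and u' in T^3; hence every resolving set of T^3 contains u or u'. -/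
open SimpleGraph

/-!
In a connected graph the cube distance is `ceil3` of the distance: a shortest path cut into
blocks of three edges is a walk in the cube, and each edge of the cube spans at most three edges.
A path leaving a component of `G - v` passes through `v`, so a vertex outside both legs sees
`u` and `u'` at the same distance `d(x, v) + k`. A two-vertex component is an edge with an end
adjacent to `v`, so the distances from `v` to its ends add up to at most `3`; hence a vertex `x`
on the leg of `u` has `d(x, u) = 1` and `1 ≤ d(x, u') = d(v, x) + d(v, u) ≤ 3`, and both cube
distances are `1`.
-/

namespace SimpleGraph

variable {V : Type*} {G : SimpleGraph V}

lemma cube_adj_of_walk {a b : V} (p : G.Walk a b) (hab : a ≠ b) (hp : p.length ≤ 3) :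
    (cube G).Adj a b :=
  ⟨hab, Reachable.pos_dist_of_ne ⟨p⟩ hab, (dist_le p).trans hp⟩

lemma exists_cube_walk_length_le {a b : V} (p : G.Walk a b) :
    ∃ q : (cube G).Walk a b, q.length ≤ ceil3 p.length := by
  induction hn : p.length using Nat.strong_induction_on generalizing a with
  | _ n ih =>
  by_cases hab : a = b
  · subst hab
    exact ⟨.nil, Nat.zero_le _⟩
  have hpos : 0 < n := Nat.pos_of_ne_zero fun h => hab (p.eq_of_length_eq_zero (hn.trans h))
  by_cases hle : n ≤ 3
  · refine ⟨(cube_adj_of_walk p hab (hn ▸ hle)).toWalk, ?_⟩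
    simp only [Walk.length_cons, Walk.length_nil, ceil3]
    omega
  obtain ⟨q, hq⟩ := ih (n - 3) (by omega) (p.drop 3) (by rw [Walk.drop_length, hn])
  by_cases hac : a = p.getVert 3
  · exact ⟨q.copy hac.symm rfl, by rw [Walk.length_copy]; unfold ceil3 at hq ⊢; omega⟩
  · refine ⟨.cons (cube_adj_of_walk (p.take 3) hac (by simp)) q, ?_⟩
    rw [Walk.length_cons]
    unfold ceil3 at hq ⊢
    omega

lemma Connected.dist_le_three_mul_length (hc : G.Connected) {a b : V} (q : (cube G).Walk a b) :
    G.dist a b ≤ 3 * q.length := by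
  induction q with
  | nil => simp
  | @cons a c b h q ih =>
    have htri := hc.dist_triangle (u := a) (v := c) (w := b)
    have hac : G.dist a c ≤ 3 := h.2.2
    rw [Walk.length_cons]
    omega

lemma Connected.cube_dist_eq_ceil3 (hc : G.Connected) (a b : V) :
    (cube G).dist a b = ceil3 (G.dist a b) := by
  obtain ⟨p, hp⟩ := hc.exists_walk_length_eq_dist a b
  obtain ⟨q, hq⟩ := exists_cube_walk_length_le p
  obtain ⟨r, hr⟩ := Reachable.exists_walk_length_eq_dist ⟨q⟩
  have hupper := dist_le q
  have hlower := hc.dist_le_three_mul_length r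
  unfold ceil3 at hq ⊢
  omega

lemma ConnectedComponent.supp_eq_pair {C : G.ConnectedComponent} (hC : C.supp.ncard = 2)
    {a b : V} (ha : a ∈ C.supp) (hb : b ∈ C.supp) (hab : a ≠ b) : C.supp = {a, b} :=
  (Set.eq_of_subset_of_ncard_le (Set.insert_subset ha (Set.singleton_subset_iff.2 hb))
    (by rw [hC, Set.ncard_pair hab]) (Set.finite_of_ncard_ne_zero (by omega))).symm

lemma ConnectedComponent.adj_of_ncard_supp_eq_two {C : G.ConnectedComponent}
    (hC : C.supp.ncard = 2) {a b : V} (ha : a ∈ C.supp) (hb : b ∈ C.supp) (hab : a ≠ b) :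
    G.Adj a b := by
  obtain ⟨p⟩ := ConnectedComponent.exact (ha.trans hb.symm)
  cases p with
  | nil => exact absurd rfl hab
  | @cons _ c _ h q =>
    have hc : c ∈ C.supp := (ConnectedComponent.sound h.reachable).symm.trans ha
    rw [C.supp_eq_pair hC ha hb hab] at hc
    rcases hc with rfl | rfl
    · exact absurd rfl h.ne
    · exact h

lemma exists_adj_reachable_of_walk {y v : V} (p : G.Walk y v) (hy : y ≠ v) :
    ∃ a : {x // x ≠ v}, G.Adj a v ∧ (G.induce {x | x ≠ v}).Reachable ⟨y, hy⟩ a := by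
  induction p with
  | nil => exact absurd rfl hy
  | @cons y c w h q ih =>
    by_cases hc : c = w
    · subst hc
      exact ⟨⟨y, hy⟩, h, .refl _⟩
    · obtain ⟨a, ha, hr⟩ := ih hc
      have hyc : (G.induce {x | x ≠ w}).Adj ⟨y, hy⟩ ⟨c, hc⟩ := h
      exact ⟨a, ha, hyc.reachable.trans hr⟩

variable {v : V}

lemma Connected.exists_mem_supp_adj (hc : G.Connected)
    (C : (G.induce {x | x ≠ v}).ConnectedComponent) : ∃ a ∈ C.supp, G.Adj a v := by
  obtain ⟨y, hy⟩ := C.nonempty_supp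
  obtain ⟨p⟩ := hc.preconnected y v
  obtain ⟨a, ha, hr⟩ := exists_adj_reachable_of_walk p y.2
  exact ⟨a, (ConnectedComponent.sound hr).symm.trans hy, ha⟩

lemma Connected.dist_eq_add_of_connectedComponentMk_ne (hc : G.Connected) {a b : {x // x ≠ v}}
    (hab : (G.induce {x | x ≠ v}).connectedComponentMk a ≠
      (G.induce {x | x ≠ v}).connectedComponentMk b) :
    G.dist a b = G.dist a v + G.dist v b := by
  classical
  obtain ⟨p, hp⟩ := hc.exists_walk_length_eq_dist a b
  have hv : v ∈ p.support := by
    by_contra hv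
    exact hab (ConnectedComponent.sound
      ⟨p.induce {x | x ≠ v} fun x hx hxv => hv (hxv ▸ hx)⟩)
  have htake := dist_le (p.takeUntil v hv)
  have hdrop := dist_le (p.dropUntil v hv)
  have hsplit := congrArg Walk.length (p.take_spec hv)
  rw [Walk.length_append] at hsplit
  have htri := hc.dist_triangle (u := (a : V)) (v := v) (w := (b : V))
  omega

lemma Connected.dist_add_dist_le_three (hc : G.Connected)
    {C : (G.induce {x | x ≠ v}).ConnectedComponent} (hC : C.supp.ncard = 2)
    {a b : {x // x ≠ v}} (ha : a ∈ C.supp) (hb : b ∈ C.supp) (hab : a ≠ b) :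
    G.dist v a + G.dist v b ≤ 3 := by
  have hadj : G.Adj a b := C.adj_of_ncard_supp_eq_two hC ha hb hab
  obtain ⟨c, hcC, hcv⟩ := hc.exists_mem_supp_adj C
  have hvc : G.dist v c = 1 := dist_eq_one_iff_adj.2 hcv.symm
  rw [C.supp_eq_pair hC ha hb hab] at hcC
  rcases hcC with rfl | rfl
  · have htri := hc.dist_triangle (u := v) (v := (c : V)) (w := (b : V))
    rw [dist_eq_one_iff_adj.2 hadj] at htri
    omega
  · have htri := hc.dist_triangle (u := v) (v := (c : V)) (w := (a : V))
    rw [dist_eq_one_iff_adj.2 hadj.symm] at htri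
    omega

lemma Connected.ceil3_dist_eq_of_mem_supp (hc : G.Connected)
    {C C' : (G.induce {x | x ≠ v}).ConnectedComponent} (hCC' : C ≠ C') (hC : C.supp.ncard = 2)
    {x u u' : {x // x ≠ v}} (hx : x ∈ C.supp) (hu : u ∈ C.supp) (hu' : u' ∈ C'.supp)
    (hxu : x ≠ u) (hdist : G.dist v u = G.dist v u') :
    ceil3 (G.dist x u) = ceil3 (G.dist x u') := by
  have hone : G.dist x u = 1 := dist_eq_one_iff_adj.2 (C.adj_of_ncard_supp_eq_two hC hx hu hxu)
  have hxu' : G.dist x u' = G.dist v x + G.dist v u' := by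
    rw [hc.dist_eq_add_of_connectedComponentMk_ne (by rwa [hx, hu']), dist_comm]
  have hsum := hc.dist_add_dist_le_three hC hx hu hxu
  have hxv := hc.pos_dist_of_ne x.2.symm
  unfold ceil3
  omega

end SimpleGraph

lemma IsResolving.mem_or_mem {V : Type*} {G : SimpleGraph V} {S : Set V}
    (hS : IsResolving G S) {a b : V} (hab : a ≠ b)
    (h : ∀ x, x ≠ a → x ≠ b → G.dist x a = G.dist x b) : a ∈ S ∨ b ∈ S := by
  obtain ⟨s, hsS, hs⟩ := hS a b hab
  by_contra! hab'
  exact hs (h s (ne_of_mem_of_not_mem hsS hab'.1) (ne_of_mem_of_not_mem hsS hab'.2))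

theorem midleg_pair_unresolved_general {V : Type*} (G : SimpleGraph V)
    (hT : G.IsTree) (v : V)
    (D D' : (G.induce {x | x ≠ v}).ConnectedComponent) (hne : D ≠ D')
    (hmid : D.supp.ncard = 2) (hmid' : D'.supp.ncard = 2)
    (u : {x : V // x ≠ v}) (u' : {x : V // x ≠ v})
    (hu : u ∈ D.supp) (hu' : u' ∈ D'.supp) (k : ℕ)
    (hdu : G.dist v (u : V) = k) (hdu' : G.dist v (u' : V) = k) :
    (∀ x : V, x ≠ (u : V) → x ≠ (u' : V) →
        (cube G).dist x (u : V) = (cube G).dist x (u' : V)) ∧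
    (∀ S : Set V, IsResolving (cube G) S → (u : V) ∈ S ∨ (u' : V) ∈ S) := by
  have hc := hT.connected
  have hdist : G.dist v u = G.dist v u' := hdu.trans hdu'.symm
  have huu' : (u : V) ≠ u' := fun h =>
    hne (hu.symm.trans ((congrArg _ (Subtype.ext h)).trans hu'))
  have hequal : ∀ x : V, x ≠ u → x ≠ u' → (cube G).dist x u = (cube G).dist x u' := by
    intro x hxu hxu'
    rw [hc.cube_dist_eq_ceil3, hc.cube_dist_eq_ceil3]
    by_cases hxv : x = v
    · rw [hxv, hdist]
    lift x to {x // x ≠ v} using hxv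
    by_cases hxD : x ∈ D.supp
    · exact hc.ceil3_dist_eq_of_mem_supp hne hmid hxD hu hu'
        (Subtype.coe_injective.ne_iff.1 hxu) hdist
    by_cases hxD' : x ∈ D'.supp
    · exact (hc.ceil3_dist_eq_of_mem_supp hne.symm hmid' hxD' hu' hu
        (Subtype.coe_injective.ne_iff.1 hxu') hdist.symm).symm
    rw [hc.dist_eq_add_of_connectedComponentMk_ne (b := u) (by rwa [hu]),
      hc.dist_eq_add_of_connectedComponentMk_ne (b := u') (by rwa [hu']), hdist]
  exact ⟨hequal, fun S hS => hS.mem_or_mem huu' hequal⟩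

/-- Vertices at equal distance k ∈ {1,2} from a major stem on two distinct mid
legs cannot be resolved by any third vertex in the cube of the tree; hence any
resolving set of the cube contains one of them. -/
theorem midleg_pair_unresolved {V : Type*} [Fintype V] (G : SimpleGraph V)
    [DecidableRel G.Adj] (hT : G.IsTree) (v : V) (hdeg : 3 ≤ G.degree v)
    (D D' : (G.induce {x | x ≠ v}).ConnectedComponent) (hne : D ≠ D')
    (hleg : IsLegComp G v D) (hleg' : IsLegComp G v D')
    (hmid : D.supp.ncard = 2) (hmid' : D'.supp.ncard = 2)
    (u : {x : V // x ≠ v}) (u' : {x : V // x ≠ v})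
    (hu : u ∈ D.supp) (hu' : u' ∈ D'.supp) (k : ℕ) (hk : k = 1 ∨ k = 2)
    (hdu : G.dist v (u : V) = k) (hdu' : G.dist v (u' : V) = k) :
    (∀ x : V, x ≠ (u : V) → x ≠ (u' : V) →
        (cube G).dist x (u : V) = (cube G).dist x (u' : V)) ∧
    (∀ S : Set V, IsResolving (cube G) S → (u : V) ∈ S ∨ (u' : V) ∈ S) :=
  midleg_pair_unresolved_general G hT v D D' hne hmid hmid' u u' hu hu' k hdu hdu'
end

section
/- For every positive integer n there exists a tree T such that the metric dimension of its cube equals n: β(T^3) = n. -/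
open SimpleGraph

/-!
The star `K_{1,n}` has diameter `2`, so its cube is the complete graph `K_{n+1}`. In a complete
graph every vertex outside `S` is at distance `1` from every vertex of `S`, so `S` is resolving
iff it misses at most one vertex; hence `β(K_{n+1}) = n`.
-/

variable {V : Type*}

lemma SimpleGraph.IsUniversal.dist_le_two {G : SimpleGraph V} {r : V} (hr : G.IsUniversal r)
    (u v : V) : G.dist u v ≤ 2 := by
  have dist_center_le_one : ∀ w, G.dist r w ≤ 1 := fun w => by
    rcases eq_or_ne r w with rfl | hrw
    · simp
    · exact (dist_eq_one_iff_adj.mpr (hr hrw)).le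
  calc G.dist u v ≤ G.dist u r + G.dist r v := (Connected.of_isUniversal hr).dist_triangle
    _ ≤ 1 + 1 := by
      rw [dist_comm]
      exact add_le_add (dist_center_le_one u) (dist_center_le_one v)

lemma cube_eq_top_of_dist_le_three {G : SimpleGraph V} (hG : G.Connected)
    (hdist : ∀ u v, G.dist u v ≤ 3) : cube G = ⊤ := by
  ext u v
  simp only [cube, top_adj, and_iff_left_iff_imp]
  exact fun huv => ⟨hG.pos_dist_of_ne huv, hdist u v⟩

lemma isResolving_top_iff {S : Set V} : IsResolving ⊤ S ↔ Sᶜ.Subsingleton := by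
  constructor
  · intro hS a ha b hb
    by_contra hab
    obtain ⟨s, hs, hd⟩ := hS a b hab
    have hsa : s ≠ a := fun h => ha (h ▸ hs)
    have hsb : s ≠ b := fun h => hb (h ▸ hs)
    exact hd ((dist_top_of_ne hsa).trans (dist_top_of_ne hsb).symm)
  · intro hS u v huv
    by_cases hu : u ∈ S
    · exact ⟨u, hu, by rw [dist_self, dist_top_of_ne huv]; omega⟩
    · have hv : v ∈ S := by_contra fun hv => huv (hS hu hv)
      exact ⟨v, hv, by rw [dist_self, dist_top_of_ne huv.symm]; omega⟩

lemma isResolving_top_iff_card_compl_le_one [Fintype V] [DecidableEq V] {S : Finset V} :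
    IsResolving ⊤ (S : Set V) ↔ Sᶜ.card ≤ 1 := by
  rw [isResolving_top_iff, Finset.card_le_one]
  simp [Set.Subsingleton]

lemma metricDim_top [Fintype V] : metricDim (⊤ : SimpleGraph V) = Fintype.card V - 1 := by
  classical
  obtain ⟨S₀, -, hS₀⟩ := Finset.exists_subset_card_eq (Nat.sub_le (Finset.univ : Finset V).card 1)
  rw [Finset.card_univ] at hS₀
  have hres₀ : IsResolving ⊤ (S₀ : Set V) := by
    rw [isResolving_top_iff_card_compl_le_one, Finset.card_compl]
    omega
  have hmem : Fintype.card V - 1 ∈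
      {k | ∃ S : Finset V, S.card = k ∧ IsResolving ⊤ (S : Set V)} :=
    ⟨S₀, hS₀, hres₀⟩
  refine le_antisymm (Nat.sInf_le hmem) (le_csInf ⟨_, hmem⟩ ?_)
  rintro k ⟨S, rfl, hS⟩
  rw [isResolving_top_iff_card_compl_le_one, Finset.card_compl] at hS
  omega

/-- Every positive integer is attained as the metric dimension of the cube of
some tree. -/
theorem exists_tree_cube_metricDim (n : ℕ) (hn : 0 < n) :
    ∃ (m : ℕ) (G : SimpleGraph (Fin m)), 2 ≤ m ∧ G.IsTree ∧
      metricDim (cube G) = n := by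
  refine ⟨n + 1, starGraph 0, by omega, isTree_starGraph 0, ?_⟩
  have hcube : cube (starGraph (0 : Fin (n + 1))) = ⊤ :=
    cube_eq_top_of_dist_le_three (connected_starGraph 0)
      fun u v => (isUniversal_starGraph_self.dist_le_two u v).trans (by norm_num)
  rw [hcube, metricDim_top, Fintype.card_fin, Nat.add_sub_cancel]
end
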